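/- The hoisting transformations terminate: there is no infinite sequence of hoisting steps. Concretely, defining the size measure ms(@(x,x⁺)) = 1, ms(let x = λy⁺.M in N) = 2·ms(M) + ms(N), ms(let x = C in N) = 2·ms(N) for non-function C, ms(ℓ > N) = 2·ms(N), every hoisting step strictly decreases ms. -/

import Mathlib

/-!
`ms` doubles the weight of whatever sits under a non-function `let`, a label, or a function
body, but counts the continuation of a function `let` only once. Hoisting `let y = λz⁺.T`
out of such a position therefore replaces `2·(2·ms T + ms M)` by `2·ms T + 2·ms M`, losing
`2·ms T > 0`; and since `ms` of a hoisting context is strictly monotone in its hole, every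
hoisting step decreases `ms`. An infinite sequence of steps would thus give a strictly
decreasing sequence of natural numbers.
-/

namespace CostLabelling

abbrev Var := ℕ
abbrev Label := ℕ

inductive Tm : Type where
  | var : Var → Tm
  | lam : List Var → Tm → Tm
  | app : Tm → List Tm → Tm
  | tup : List Tm → Tm
  | proj : ℕ → Tm → Tm
  | letin : Var → Tm → Tm → Tm
  | pre : Label → Tm → Tm
  | post : Tm → Label → Tm

inductive IsValue : Tm → Prop where
  | var : ∀ x, IsValue (.var x)
  | lam : ∀ xs M, IsValue (.lam xs M)
  | tup : ∀ Vs, (∀ V ∈ Vs, IsValue V) → IsValue (.tup Vs)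

mutual
def subst (V : Tm) (x : Var) : Tm → Tm
  | .var y => if y = x then V else .var y
  | .lam xs M => if x ∈ xs then .lam xs M else .lam xs (subst V x M)
  | .app M Ns => .app (subst V x M) (substList V x Ns)
  | .tup Ms => .tup (substList V x Ms)
  | .proj i M => .proj i (subst V x M)
  | .letin y M N => .letin y (subst V x M) (if y = x then N else subst V x N)
  | .pre l M => .pre l (subst V x M)
  | .post M l => .post (subst V x M) l
def substList (V : Tm) (x : Var) : List Tm → List Tm
  | [] => []
  | M :: Ms => subst V x M :: substList V x Ms
end

mutual
def fv : Tm → List Var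
  | .var x => [x]
  | .lam xs M => (fv M).filter (fun y => y ∉ xs)
  | .app M Ns => fv M ++ fvList Ns
  | .tup Ms => fvList Ms
  | .proj _ M => fv M
  | .letin y M N => fv M ++ (fv N).filter (fun z => z ≠ y)
  | .pre _ M => fv M
  | .post M _ => fv M
def fvList : List Tm → List Var
  | [] => []
  | M :: Ms => fv M ++ fvList Ms
end

/-- `C` is not a function. -/
def NonFun (C : Tm) : Prop := ∀ ys B, C ≠ .lam ys B

/-- Restricted (simple) terms `T ::= @(x,x⁺) | let x = C in T | ℓ > T` with
`C ::= (x*) | πᵢ(x)` : terms containing no function definitions. -/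
inductive Simple : Tm → Prop where
  | app : ∀ (x : Var) (ys : List Var), Simple (.app (.var x) (ys.map .var))
  | letTup : ∀ x (ys : List Var) T, Simple T →
      Simple (.letin x (.tup (ys.map .var)) T)
  | letProj : ∀ x i (y : Var) T, Simple T →
      Simple (.letin x (.proj i (.var y)) T)
  | pre : ∀ l T, Simple T → Simple (.pre l T)

/-- Hoisting contexts
`D ::= [] | let x = C in D | let x = λy⁺.D in M | ℓ > D`. -/
inductive HCtx : Type where
  | hole : HCtx
  | letC : Var → Tm → HCtx → HCtx
  | letLam : Var → List Var → HCtx → Tm → HCtx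
  | pre : Label → HCtx → HCtx

def hplug : HCtx → Tm → Tm
  | .hole, M => M
  | .letC x C D, M => .letin x C (hplug D M)
  | .letLam x ys D N, M => .letin x (.lam ys (hplug D M)) N
  | .pre l D, M => .pre l (hplug D M)

/-- The hoisting transformations `(h₁)`, `(h₂)`, `(h₃)`, applied under a
hoisting context `D`. -/
inductive Hoist : Tm → Tm → Prop where
  | h1 : ∀ D x C y (zs : List Var) T M, Simple T → NonFun C →
      x ∉ fv (.lam zs T) →
      Hoist (hplug D (.letin x C (.letin y (.lam zs T) M)))
            (hplug D (.letin y (.lam zs T) (.letin x C M)))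
  | h2 : ∀ D x (ws : List Var) y (zs : List Var) T M N, Simple T →
      (∀ w ∈ ws, w ∉ fv (.lam zs T)) →
      Hoist (hplug D (.letin x (.lam ws (.letin y (.lam zs T) M)) N))
            (hplug D (.letin y (.lam zs T) (.letin x (.lam ws M) N)))
  | h3 : ∀ D l y (zs : List Var) T M, Simple T →
      Hoist (hplug D (.pre l (.letin y (.lam zs T) M)))
            (hplug D (.letin y (.lam zs T) (.pre l M)))

/-- The size measure: `ms(@(x,x⁺)) = 1`,
`ms(let x = λy⁺.M in N) = 2·ms(M) + ms(N)`,
`ms(let x = C in N) = 2·ms(N)` for non-function `C`,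
`ms(ℓ > N) = 2·ms(N)`. -/
def ms : Tm → ℕ
  | .app _ _ => 1
  | .letin _ (.lam _ M) N => 2 * ms M + ms N
  | .letin _ _ N => 2 * ms N
  | .pre _ N => 2 * ms N
  | _ => 1

theorem ms_pos : ∀ M, 0 < ms M
  | .letin _ C N => by
    have := ms_pos N
    cases C <;> simp only [ms] <;> omega
  | .pre _ N => by
    have := ms_pos N
    simp only [ms]
    omega
  | .var _ | .lam _ _ | .app _ _ | .tup _ | .proj _ _ | .post _ _ => by simp [ms]

theorem ms_letin_of_nonFun (x : Var) {C : Tm} (hC : NonFun C) (N : Tm) :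
    ms (.letin x C N) = 2 * ms N := by
  cases C with
  | lam ys B => exact absurd rfl (hC ys B)
  | _ => rfl

theorem ms_hplug_lt_ms_hplug (D : HCtx) {M N : Tm} (h : ms N < ms M) :
    ms (hplug D N) < ms (hplug D M) := by
  induction D with
  | hole => exact h
  | letC _ C _ _ => cases C <;> simp only [hplug, ms] <;> omega
  | letLam | pre => simp only [hplug, ms]; omega

theorem Hoist.ms_lt {M N : Tm} (h : Hoist M N) : ms N < ms M := by
  cases h with
  | h1 D x C _ _ T _ _ hC =>
    apply ms_hplug_lt_ms_hplug
    have := ms_pos T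
    simp only [ms_letin_of_nonFun x hC, ms]
    omega
  | h2 D _ _ _ _ T =>
    apply ms_hplug_lt_ms_hplug
    have := ms_pos T
    simp only [ms]
    omega
  | h3 D _ _ _ T =>
    apply ms_hplug_lt_ms_hplug
    have := ms_pos T
    simp only [ms]
    omega

/-- Every hoisting step strictly decreases `ms`; hence
there is no infinite sequence of hoisting steps. -/
theorem hoisting_terminates :
    (∀ M N, Hoist M N → ms N < ms M) ∧
    ¬ ∃ f : ℕ → Tm, ∀ n, Hoist (f n) (f (n + 1)) := by
  refine ⟨fun _ _ h => h.ms_lt, ?_⟩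
  rintro ⟨f, hf⟩
  exact not_strictAnti_of_wellFoundedLT (ms ∘ f)
    (strictAnti_nat_of_succ_lt fun n => (hf n).ms_lt)

end CostLabelling
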